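/- Let L be a Lie algebra over ℝ and let J : L → L be an ℝ-linear map with J ∘ J = −Id (an almost-complex structure). Let J_ℂ denote its ℂ-linear extension to the complexification ℂ ⊗[ℝ] L. Then the Nijenhuis torsion of J vanishes (T_J(X,Y) = 0 for all X, Y ∈ L) if and only if the i-eigenspace of J_ℂ is closed under the bracket: for all Z, W ∈ ℂ ⊗[ℝ] L with J_ℂ Z = i • Z and J_ℂ W = i • W, one has J_ℂ [Z, W] = i • [Z, W]. -/
import Mathlib

open scoped TensorProduct

/-- The Nijenhuis torsion of an endomorphism `J` of a Lie ring:
`T_J(X,Y) = [J X, J Y] − J [J X, Y] − J [X, J Y] + J (J [X, Y])`. -/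
def nijenhuisTorsion {L : Type*} [LieRing L] (J : L → L) (X Y : L) : L :=
  ⁅J X, J Y⁆ - J ⁅J X, Y⁆ - J ⁅X, J Y⁆ + J (J ⁅X, Y⁆)

/-- The "imaginary part" projection `ℂ ⊗[ℝ] L → L`. -/
noncomputable def imPartAux (L : Type*) [AddCommGroup L] [Module ℝ L] : ℂ ⊗[ℝ] L →ₗ[ℝ] L :=
  (TensorProduct.lid ℝ L).toLinearMap ∘ₗ LinearMap.rTensor L Complex.imLm

lemma imPartAux_tmul {L : Type*} [AddCommGroup L] [Module ℝ L] (a : ℂ) (x : L) :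
    imPartAux L (a ⊗ₜ[ℝ] x) = a.im • x := by
  simp [imPartAux]

set_option maxHeartbeats 1000000 in
theorem stmt_14 {L : Type*} [LieRing L] [LieAlgebra ℝ L]
    (J : L →ₗ[ℝ] L) (hJ : J ∘ₗ J = -LinearMap.id) :
    (∀ X Y : L, nijenhuisTorsion ⇑J X Y = 0) ↔
      (∀ Z W : ℂ ⊗[ℝ] L,
        LinearMap.baseChange ℂ J Z = Complex.I • Z →
        LinearMap.baseChange ℂ J W = Complex.I • W →
        LinearMap.baseChange ℂ J ⁅Z, W⁆ = Complex.I • ⁅Z, W⁆) := by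
  have hJL : ∀ x : L, J (J x) = -x := by
    intro x
    have := congrFun (congrArg DFunLike.coe hJ) x
    simpa using this
  have hJ2 : ∀ v : ℂ ⊗[ℝ] L,
      LinearMap.baseChange ℂ J (LinearMap.baseChange ℂ J v) = -v := by
    have h2 : LinearMap.baseChange ℂ J ∘ₗ LinearMap.baseChange ℂ J
        = -(LinearMap.id : ℂ ⊗[ℝ] L →ₗ[ℂ] ℂ ⊗[ℝ] L) := by
      rw [← LinearMap.baseChange_comp, hJ]
      ext v
      simp
    intro v
    have := congrFun (congrArg DFunLike.coe h2) v
    simpa using this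
  -- bracket lemmas, instantiated at the correct instances
  have ladd : ∀ Z W V : ℂ ⊗[ℝ] L, ⁅Z, W + V⁆ = ⁅Z, W⁆ + ⁅Z, V⁆ :=
    fun Z W V => lie_add Z W V
  have addl : ∀ Z W V : ℂ ⊗[ℝ] L, ⁅Z + W, V⁆ = ⁅Z, V⁆ + ⁅W, V⁆ :=
    fun Z W V => add_lie Z W V
  have lsub : ∀ Z W V : ℂ ⊗[ℝ] L, ⁅Z, W - V⁆ = ⁅Z, W⁆ - ⁅Z, V⁆ :=
    fun Z W V => lie_sub Z W V
  have subl : ∀ Z W V : ℂ ⊗[ℝ] L, ⁅Z - W, V⁆ = ⁅Z, V⁆ - ⁅W, V⁆ :=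
    fun Z W V => sub_lie Z W V
  have lzero : ∀ Z : ℂ ⊗[ℝ] L, ⁅Z, (0 : ℂ ⊗[ℝ] L)⁆ = 0 := fun Z => lie_zero Z
  have zerol : ∀ Z : ℂ ⊗[ℝ] L, ⁅(0 : ℂ ⊗[ℝ] L), Z⁆ = 0 := fun Z => zero_lie Z
  have lsmul : ∀ (c : ℂ) (Z W : ℂ ⊗[ℝ] L), ⁅Z, c • W⁆ = c • ⁅Z, W⁆ :=
    fun c Z W => lie_smul c Z W
  have smull : ∀ (c : ℂ) (Z W : ℂ ⊗[ℝ] L), ⁅c • Z, W⁆ = c • ⁅Z, W⁆ :=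
    fun c Z W => smul_lie c Z W
  have hIsm : ∀ v : L, Complex.I • ((1 : ℂ) ⊗ₜ[ℝ] v) = Complex.I ⊗ₜ[ℝ] v := by
    intro v
    rw [TensorProduct.smul_tmul', smul_eq_mul, mul_one]
  constructor
  · intro hT Z W hZ hW
    have key : ∀ Z W : ℂ ⊗[ℝ] L,
        ⁅LinearMap.baseChange ℂ J Z, LinearMap.baseChange ℂ J W⁆
          - LinearMap.baseChange ℂ J ⁅LinearMap.baseChange ℂ J Z, W⁆
          - LinearMap.baseChange ℂ J ⁅Z, LinearMap.baseChange ℂ J W⁆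
          + LinearMap.baseChange ℂ J (LinearMap.baseChange ℂ J ⁅Z, W⁆) = 0 := by
      intro Z W
      induction Z using TensorProduct.induction_on with
      | zero => simp [zerol, lzero, map_zero]
      | tmul a X =>
        induction W using TensorProduct.induction_on with
        | zero => simp [zerol, lzero, map_zero]
        | tmul b Y =>
          have hT' := hT X Y
          simp only [nijenhuisTorsion] at hT'
          simp only [LinearMap.baseChange_tmul,
            LieAlgebra.ExtendScalars.bracket_tmul]
          rw [← TensorProduct.tmul_sub, ← TensorProduct.tmul_sub,
            ← TensorProduct.tmul_add, hT', TensorProduct.tmul_zero]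
        | add W1 W2 h1 h2 =>
          simp only [map_add, ladd]
          rw [show
            ⁅LinearMap.baseChange ℂ J (a ⊗ₜ[ℝ] X), LinearMap.baseChange ℂ J W1⁆
              + ⁅LinearMap.baseChange ℂ J (a ⊗ₜ[ℝ] X), LinearMap.baseChange ℂ J W2⁆
              - (LinearMap.baseChange ℂ J ⁅LinearMap.baseChange ℂ J (a ⊗ₜ[ℝ] X), W1⁆
                + LinearMap.baseChange ℂ J ⁅LinearMap.baseChange ℂ J (a ⊗ₜ[ℝ] X), W2⁆)
              - (LinearMap.baseChange ℂ J ⁅a ⊗ₜ[ℝ] X, LinearMap.baseChange ℂ J W1⁆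
                + LinearMap.baseChange ℂ J ⁅a ⊗ₜ[ℝ] X, LinearMap.baseChange ℂ J W2⁆)
              + (LinearMap.baseChange ℂ J (LinearMap.baseChange ℂ J ⁅a ⊗ₜ[ℝ] X, W1⁆)
                + LinearMap.baseChange ℂ J (LinearMap.baseChange ℂ J ⁅a ⊗ₜ[ℝ] X, W2⁆))
            = (⁅LinearMap.baseChange ℂ J (a ⊗ₜ[ℝ] X), LinearMap.baseChange ℂ J W1⁆
                - LinearMap.baseChange ℂ J ⁅LinearMap.baseChange ℂ J (a ⊗ₜ[ℝ] X), W1⁆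
                - LinearMap.baseChange ℂ J ⁅a ⊗ₜ[ℝ] X, LinearMap.baseChange ℂ J W1⁆
                + LinearMap.baseChange ℂ J (LinearMap.baseChange ℂ J ⁅a ⊗ₜ[ℝ] X, W1⁆))
              + (⁅LinearMap.baseChange ℂ J (a ⊗ₜ[ℝ] X), LinearMap.baseChange ℂ J W2⁆
                - LinearMap.baseChange ℂ J ⁅LinearMap.baseChange ℂ J (a ⊗ₜ[ℝ] X), W2⁆
                - LinearMap.baseChange ℂ J ⁅a ⊗ₜ[ℝ] X, LinearMap.baseChange ℂ J W2⁆
                + LinearMap.baseChange ℂ J (LinearMap.baseChange ℂ J ⁅a ⊗ₜ[ℝ] X, W2⁆))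
            from by abel]
          rw [h1, h2, add_zero]
      | add Z1 Z2 h1 h2 =>
        simp only [map_add, addl]
        rw [show
          ⁅LinearMap.baseChange ℂ J Z1, LinearMap.baseChange ℂ J W⁆
            + ⁅LinearMap.baseChange ℂ J Z2, LinearMap.baseChange ℂ J W⁆
            - (LinearMap.baseChange ℂ J ⁅LinearMap.baseChange ℂ J Z1, W⁆
              + LinearMap.baseChange ℂ J ⁅LinearMap.baseChange ℂ J Z2, W⁆)
            - (LinearMap.baseChange ℂ J ⁅Z1, LinearMap.baseChange ℂ J W⁆
              + LinearMap.baseChange ℂ J ⁅Z2, LinearMap.baseChange ℂ J W⁆)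
            + (LinearMap.baseChange ℂ J (LinearMap.baseChange ℂ J ⁅Z1, W⁆)
              + LinearMap.baseChange ℂ J (LinearMap.baseChange ℂ J ⁅Z2, W⁆))
          = (⁅LinearMap.baseChange ℂ J Z1, LinearMap.baseChange ℂ J W⁆
              - LinearMap.baseChange ℂ J ⁅LinearMap.baseChange ℂ J Z1, W⁆
              - LinearMap.baseChange ℂ J ⁅Z1, LinearMap.baseChange ℂ J W⁆
              + LinearMap.baseChange ℂ J (LinearMap.baseChange ℂ J ⁅Z1, W⁆))
            + (⁅LinearMap.baseChange ℂ J Z2, LinearMap.baseChange ℂ J W⁆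
              - LinearMap.baseChange ℂ J ⁅LinearMap.baseChange ℂ J Z2, W⁆
              - LinearMap.baseChange ℂ J ⁅Z2, LinearMap.baseChange ℂ J W⁆
              + LinearMap.baseChange ℂ J (LinearMap.baseChange ℂ J ⁅Z2, W⁆))
          from by abel]
        rw [h1, h2, add_zero]
    have h0 := key Z W
    rw [hZ, hW] at h0
    simp only [smull, lsmul, smul_smul, Complex.I_mul_I, neg_one_smul,
      map_smul, hJ2] at h0
    -- h0 : -⁅Z,W⁆ - I•Jc⁅Z,W⁆ - I•Jc⁅Z,W⁆ + -⁅Z,W⁆ = 0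
    set B := ⁅Z, W⁆ with hB
    set JB := LinearMap.baseChange ℂ J B with hJB
    have h2 : (2 : ℂ) • (Complex.I • JB - -B) = 0 := by
      rw [smul_sub, two_smul, two_smul,
        show Complex.I • JB + Complex.I • JB - (-B + -B)
          = -(-B - Complex.I • JB - Complex.I • JB + -B) from by abel, h0, neg_zero]
    have h3 : Complex.I • JB = -B :=
      sub_eq_zero.mp ((smul_eq_zero.mp h2).resolve_left two_ne_zero)
    have h4 := congrArg (fun v => (-Complex.I) • v) h3
    simpa [smul_smul, neg_mul, Complex.I_mul_I, smul_neg, neg_neg] using h4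
  · intro h X Y
    have hz : ∀ x : L,
        LinearMap.baseChange ℂ J
            ((1 : ℂ) ⊗ₜ[ℝ] x - Complex.I • ((1 : ℂ) ⊗ₜ[ℝ] J x))
          = Complex.I • ((1 : ℂ) ⊗ₜ[ℝ] x - Complex.I • ((1 : ℂ) ⊗ₜ[ℝ] J x)) := by
      intro x
      simp only [map_sub, map_smul, LinearMap.baseChange_tmul, hJL,
        TensorProduct.tmul_neg, smul_neg, smul_sub, smul_smul, Complex.I_mul_I,
        neg_one_smul, sub_neg_eq_add, neg_neg]
      abel
    have hb := h _ _ (hz X) (hz Y)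
    have hbr : ⁅(1 : ℂ) ⊗ₜ[ℝ] X - Complex.I • ((1 : ℂ) ⊗ₜ[ℝ] J X),
          (1 : ℂ) ⊗ₜ[ℝ] Y - Complex.I • ((1 : ℂ) ⊗ₜ[ℝ] J Y)⁆
        = (1 : ℂ) ⊗ₜ[ℝ] (⁅X, Y⁆ - ⁅J X, J Y⁆)
          - Complex.I ⊗ₜ[ℝ] (⁅X, J Y⁆ + ⁅J X, Y⁆) := by
      simp only [subl, lsub, smull, lsmul, smul_smul, Complex.I_mul_I,
        LieAlgebra.ExtendScalars.bracket_tmul, one_mul, neg_one_smul,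
        TensorProduct.tmul_sub, TensorProduct.tmul_add]
      rw [hIsm ⁅X, J Y⁆, hIsm ⁅J X, Y⁆]
      abel
    rw [hbr] at hb
    have hIsmul : Complex.I • ((1 : ℂ) ⊗ₜ[ℝ] (⁅X, Y⁆ - ⁅J X, J Y⁆)
          - Complex.I ⊗ₜ[ℝ] (⁅X, J Y⁆ + ⁅J X, Y⁆))
        = Complex.I ⊗ₜ[ℝ] (⁅X, Y⁆ - ⁅J X, J Y⁆)
          + (1 : ℂ) ⊗ₜ[ℝ] (⁅X, J Y⁆ + ⁅J X, Y⁆) := by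
      rw [smul_sub, hIsm, TensorProduct.smul_tmul', smul_eq_mul, Complex.I_mul_I,
        show ((-1 : ℂ) ⊗ₜ[ℝ] (⁅X, J Y⁆ + ⁅J X, Y⁆))
          = -((1 : ℂ) ⊗ₜ[ℝ] (⁅X, J Y⁆ + ⁅J X, Y⁆)) from by
            rw [← TensorProduct.neg_tmul]]
      abel
    rw [hIsmul, map_sub, LinearMap.baseChange_tmul, LinearMap.baseChange_tmul] at hb
    have hb2 := congrArg (imPartAux L) hb
    simp only [map_sub, map_add, imPartAux_tmul, Complex.one_im, Complex.I_im,
      one_smul, zero_smul, zero_sub, add_zero, zero_add] at hb2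
    -- hb2 : -(J (⁅X, J Y⁆ + ⁅J X, Y⁆)) = ⁅X, Y⁆ - ⁅J X, J Y⁆
    have e : J ⁅X, J Y⁆ + J ⁅J X, Y⁆ = ⁅J X, J Y⁆ - ⁅X, Y⁆ := by
      rw [← neg_sub, ← hb2, neg_neg]
    simp only [nijenhuisTorsion, hJL]
    rw [sub_sub, show J ⁅J X, Y⁆ + J ⁅X, J Y⁆ = ⁅J X, J Y⁆ - ⁅X, Y⁆ from by
      rw [add_comm]; exact e]
    abel
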